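/- arXiv:1109.4960 — 5 statements merged into one kernel-verified Lean document; each statement's English description precedes it below -/
import Mathlib

section
/- Let $\{z_t\}$ be a sequence of nonnegative reals satisfying $z_{t+1} \le (1 - r_1(t)) z_t + r_2(t)$, where $a_1/(t+1)^{\delta_1} \le r_1(t) \le 1$ and $0 \le r_2(t) \le a_2/(t+1)^{\delta_2}$ with $a_1, a_2 > 0$ and $0 \le \delta_1 = \delta_2 \le 1$. Then the sequence $\{z_t\}$ is bounded: $\sup_{t \ge 0} z_t < \infty$. -/
theorem stmt_1 (z r1 r2 : ℕ → ℝ) (a1 a2 δ1 δ2 : ℝ)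
    (ha1 : 0 < a1) (ha2 : 0 < a2) (hδ1 : 0 ≤ δ1) (hδeq : δ1 = δ2) (hδ2 : δ2 ≤ 1)
    (hznn : ∀ t : ℕ, 0 ≤ z t)
    (hrec : ∀ t : ℕ, z (t + 1) ≤ (1 - r1 t) * z t + r2 t)
    (hr1lb : ∀ t : ℕ, a1 / ((t : ℝ) + 1) ^ δ1 ≤ r1 t)
    (hr1ub : ∀ t : ℕ, r1 t ≤ 1)
    (hr2nn : ∀ t : ℕ, 0 ≤ r2 t)
    (hr2ub : ∀ t : ℕ, r2 t ≤ a2 / ((t : ℝ) + 1) ^ δ2) :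
    BddAbove (Set.range z) := by
  have hp : ∀ t : ℕ, (0:ℝ) < ((t : ℝ) + 1) ^ δ1 := fun t =>
    Real.rpow_pos_of_pos (by positivity) _
  have hr1pos : ∀ t : ℕ, 0 < r1 t := fun t =>
    lt_of_lt_of_le (div_pos ha1 (hp t)) (hr1lb t)
  -- key: r2 t ≤ r1 t * (a2/a1)
  have hkey : ∀ t : ℕ, r2 t ≤ r1 t * (a2 / a1) := by
    intro t
    have h1 : r2 t ≤ a2 / ((t : ℝ) + 1) ^ δ1 := by rw [hδeq]; exact hr2ub t
    have h2 : a2 / ((t : ℝ) + 1) ^ δ1 = (a1 / ((t : ℝ) + 1) ^ δ1) * (a2 / a1) := by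
      field_simp
    have h3 : (a1 / ((t : ℝ) + 1) ^ δ1) * (a2 / a1) ≤ r1 t * (a2 / a1) := by
      apply mul_le_mul_of_nonneg_right (hr1lb t)
      positivity
    linarith
  set M := max (z 0) (a2 / a1) with hM
  have hMb : ∀ t : ℕ, z t ≤ M := by
    intro t
    induction t with
    | zero => exact le_max_left _ _
    | succ n ih =>
      have hrec' := hrec n
      by_cases hc : z n ≤ a2 / a1
      · have h1 : (1 - r1 n) * z n ≤ (1 - r1 n) * (a2 / a1) := by
          apply mul_le_mul_of_nonneg_left hc
          linarith [hr1ub n]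
        have h2 : z (n + 1) ≤ a2 / a1 := by
          have := hkey n
          nlinarith
        exact le_trans h2 (le_max_right _ _)
      · push_neg at hc
        have h2 : r2 n ≤ r1 n * z n :=
          le_trans (hkey n) (mul_le_mul_of_nonneg_left hc.le (hr1pos n).le)
        have : z (n + 1) ≤ z n := by nlinarith
        exact le_trans this ih
  refine ⟨M, ?_⟩
  rintro x ⟨t, rfl⟩
  exact hMb t
end

section
/- Let $\{L_t\}$ be an i.i.d. sequence of Laplacian matrices taking values in a finite set, adapted so that $L_t$ is $\mathcal{F}_{t+1}$-measurable and independent of $\mathcal{F}_t$, with $\lambda_2(\mathbb{E}[L_t]) > 0$. Let $\{z_t\}$ be an $\mathbb{R}^{NM}$-valued $\mathcal{F}_t$-adapted process with $z_t \in \mathcal{C}^{\perp}$ for all $t$, and let $\beta_t = b/(t+1)^{\tau_2}$ with $b > 0$, $0 < \tau_2 \le 1$. Then there exist an $\mathcal{F}_{t+1}$-adapted $[0,1]$-valued process $\{r_t\}$, a constant $c_r > 0$, and a time $t_0$ such that for all $t \ge t_0$: $\|(I_{NM} - \beta_t (L_t \otimes I_M)) z_t\| \le (1 - r_t) \|z_t\|$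 and $\mathbb{E}[r_t \mid \mathcal{F}_t] \ge c_r / (t+1)^{\tau_2}$ almost surely. -/
open Matrix BigOperators Kronecker Filter MeasureTheory

/-- Second smallest eigenvalue of a Laplacian via the variational characterization. -/
noncomputable def lambda2 {N : ℕ} (L : Matrix (Fin N) (Fin N) ℝ) : ℝ :=
  sInf {x : ℝ | ∃ z : Fin N → ℝ, (∑ i, z i ^ 2) = 1 ∧ (∑ i, z i) = 0 ∧ x = z ⬝ᵥ (L *ᵥ z)}

section aux

variable {n : Type*} [Fintype n]

/-- entrywise Rayleigh bound -/
lemma quad_abs_bound (B : Matrix n n ℝ) (w : n → ℝ) :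
    w ⬝ᵥ (B *ᵥ w) ≤ (∑ j, ∑ k, |B j k|) * (w ⬝ᵥ w) := by
  have hdot : ∀ j : n, w j ^ 2 ≤ w ⬝ᵥ w := by
    intro j
    have : ∀ l : n, 0 ≤ w l * w l := fun l => mul_self_nonneg _
    have h := Finset.single_le_sum (f := fun l => w l * w l) (fun l _ => mul_self_nonneg _)
      (Finset.mem_univ j)
    simpa [dotProduct, sq] using h
  have key : ∀ j k : n, w j * B j k * w k ≤ |B j k| * (w ⬝ᵥ w) := by
    intro j k
    have habs : |w j * w k| ≤ w ⬝ᵥ w := by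
      rw [abs_mul]
      nlinarith [sq_abs (w j), sq_abs (w k), two_mul_le_add_sq |w j| |w k|, hdot j, hdot k,
        abs_nonneg (w j), abs_nonneg (w k)]
    calc w j * B j k * w k = B j k * (w j * w k) := by ring
      _ ≤ |B j k * (w j * w k)| := le_abs_self _
      _ = |B j k| * |w j * w k| := abs_mul _ _
      _ ≤ |B j k| * (w ⬝ᵥ w) := mul_le_mul_of_nonneg_left habs (abs_nonneg _)
  have h1 : w ⬝ᵥ (B *ᵥ w) = ∑ j, ∑ k, w j * B j k * w k := by
    simp [dotProduct, Matrix.mulVec, Finset.mul_sum, mul_assoc]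
  rw [h1, Finset.sum_mul]
  refine Finset.sum_le_sum fun j _ => ?_
  rw [Finset.sum_mul]
  exact Finset.sum_le_sum fun k _ => key j k

lemma dot_mulVec_self {S : Matrix n n ℝ} (hS : S.IsSymm) (x : n → ℝ) :
    (S *ᵥ x) ⬝ᵥ (S *ᵥ x) = x ⬝ᵥ ((S * S) *ᵥ x) := by
  rw [← Matrix.mulVec_mulVec, Matrix.dotProduct_mulVec, ← Matrix.mulVec_transpose, hS,
    dotProduct_comm]

open scoped MatrixOrder in
lemma mulVec_sq_le [DecidableEq n] {A : Matrix n n ℝ} (hA : A.PosSemidef) {K : ℝ}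
    (hK : ∀ w : n → ℝ, w ⬝ᵥ (A *ᵥ w) ≤ K * (w ⬝ᵥ w)) (v : n → ℝ) :
    (A *ᵥ v) ⬝ᵥ (A *ᵥ v) ≤ K * (v ⬝ᵥ (A *ᵥ v)) := by
  have hSsymm : (CFC.sqrt A).IsSymm := by
    unfold Matrix.IsSymm; rw [← Matrix.conjTranspose_eq_transpose_of_trivial]
    exact (CFC.sqrt_nonneg A).posSemidef.isHermitian
  have hSS : CFC.sqrt A * CFC.sqrt A = A := CFC.sqrt_mul_sqrt_self A hA.nonneg
  have h1 : A *ᵥ v = CFC.sqrt A *ᵥ (CFC.sqrt A *ᵥ v) := by rw [Matrix.mulVec_mulVec, hSS]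
  calc (A *ᵥ v) ⬝ᵥ (A *ᵥ v)
      = (CFC.sqrt A *ᵥ (CFC.sqrt A *ᵥ v)) ⬝ᵥ (CFC.sqrt A *ᵥ (CFC.sqrt A *ᵥ v)) := by rw [h1]
    _ = (CFC.sqrt A *ᵥ v) ⬝ᵥ ((CFC.sqrt A * CFC.sqrt A) *ᵥ (CFC.sqrt A *ᵥ v)) := dot_mulVec_self hSsymm _
    _ = (CFC.sqrt A *ᵥ v) ⬝ᵥ (A *ᵥ (CFC.sqrt A *ᵥ v)) := by rw [hSS]
    _ ≤ K * ((CFC.sqrt A *ᵥ v) ⬝ᵥ (CFC.sqrt A *ᵥ v)) := hK _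
    _ = K * (v ⬝ᵥ ((CFC.sqrt A * CFC.sqrt A) *ᵥ v)) := by rw [dot_mulVec_self hSsymm v]
    _ = K * (v ⬝ᵥ (A *ᵥ v)) := by rw [hSS]

lemma kron_mulVec {N M : ℕ} (L : Matrix (Fin N) (Fin N) ℝ) (v : Fin N × Fin M → ℝ)
    (p : Fin N × Fin M) :
    ((L ⊗ₖ (1 : Matrix (Fin M) (Fin M) ℝ)) *ᵥ v) p = ∑ n', L p.1 n' * v (n', p.2) := by
  obtain ⟨nn, mm⟩ := p
  simp [Matrix.mulVec, dotProduct, Fintype.sum_prod_type, Matrix.one_apply,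
    mul_ite, ite_mul, mul_assoc]

lemma quad_kron {N M : ℕ} (L : Matrix (Fin N) (Fin N) ℝ) (v : Fin N × Fin M → ℝ) :
    v ⬝ᵥ ((L ⊗ₖ (1 : Matrix (Fin M) (Fin M) ℝ)) *ᵥ v)
      = ∑ m : Fin M, (fun n => v (n, m)) ⬝ᵥ (L *ᵥ fun n => v (n, m)) := by
  rw [dotProduct, Fintype.sum_prod_type, Finset.sum_comm]
  refine Finset.sum_congr rfl fun m _ => ?_
  rw [dotProduct]
  refine Finset.sum_congr rfl fun nn _ => ?_
  rw [kron_mulVec]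
  simp [Matrix.mulVec, dotProduct]

lemma lambda2_le {N : ℕ} {L : Matrix (Fin N) (Fin N) ℝ}
    (hpsd : ∀ w : Fin N → ℝ, 0 ≤ w ⬝ᵥ (L *ᵥ w))
    {w : Fin N → ℝ} (hw : ∑ i, w i = 0) :
    lambda2 L * (∑ i, w i ^ 2) ≤ w ⬝ᵥ (L *ᵥ w) := by
  set s := ∑ i, w i ^ 2 with hs
  have hs0 : 0 ≤ s := Finset.sum_nonneg fun i _ => sq_nonneg _
  rcases eq_or_lt_of_le hs0 with h0 | hpos
  · rw [← h0, mul_zero]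
    exact hpsd w
  · have hbdd : BddBelow {x : ℝ | ∃ z : Fin N → ℝ,
        (∑ i, z i ^ 2) = 1 ∧ (∑ i, z i) = 0 ∧ x = z ⬝ᵥ (L *ᵥ z)} := by
      refine ⟨0, fun x hx => ?_⟩
      obtain ⟨zz, _, _, hxz⟩ := hx
      exact hxz ▸ hpsd zz
    have hsq : Real.sqrt s > 0 := Real.sqrt_pos.mpr hpos
    set c : ℝ := (Real.sqrt s)⁻¹ with hc
    have hc2 : c ^ 2 = s⁻¹ := by
      rw [hc, ← Real.sqrt_inv, Real.sq_sqrt (inv_nonneg.mpr hs0)]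
    have hmem : (c • w) ⬝ᵥ (L *ᵥ (c • w)) ∈ {x : ℝ | ∃ z : Fin N → ℝ,
        (∑ i, z i ^ 2) = 1 ∧ (∑ i, z i) = 0 ∧ x = z ⬝ᵥ (L *ᵥ z)} := by
      refine ⟨c • w, ?_, ?_, rfl⟩
      · have : ∑ i, (c • w) i ^ 2 = c ^ 2 * s := by
          simp [Pi.smul_apply, smul_eq_mul, mul_pow, Finset.mul_sum, hs]
        rw [this, hc2, inv_mul_cancel₀ (ne_of_gt hpos)]
      · simp [Pi.smul_apply, smul_eq_mul, ← Finset.mul_sum, hw]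
    have hle := csInf_le hbdd hmem
    have hquad : (c • w) ⬝ᵥ (L *ᵥ (c • w)) = c ^ 2 * (w ⬝ᵥ (L *ᵥ w)) := by
      rw [Matrix.mulVec_smul, smul_dotProduct, dotProduct_smul]
      simp [smul_eq_mul, sq]; ring
    rw [hquad, hc2] at hle
    have := mul_le_mul_of_nonneg_right hle (le_of_lt hpos)
    rw [inv_mul_eq_div, div_mul_cancel₀ _ (ne_of_gt hpos)] at this
    exact this

lemma quad_sum_matrix {n : Type*} [Fintype n] {κ : Type*} [Fintype κ]
    (c : κ → ℝ) (Ls : κ → Matrix n n ℝ) (w : n → ℝ) :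
    w ⬝ᵥ ((fun a b => ∑ i, c i * Ls i a b : Matrix n n ℝ) *ᵥ w)
      = ∑ i, c i * (w ⬝ᵥ (Ls i *ᵥ w)) := by
  have L : ∀ a, (∑ b, (∑ i, c i * Ls i a b) * w b) = ∑ i, c i * ∑ b, Ls i a b * w b := by
    intro a
    calc ∑ b, (∑ i, c i * Ls i a b) * w b = ∑ b, ∑ i, c i * (Ls i a b * w b) := by
          refine Finset.sum_congr rfl fun b _ => ?_
          rw [Finset.sum_mul]
          exact Finset.sum_congr rfl fun i _ => by ring
      _ = ∑ i, ∑ b, c i * (Ls i a b * w b) := Finset.sum_comm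
      _ = ∑ i, c i * ∑ b, Ls i a b * w b := by
          refine Finset.sum_congr rfl fun i _ => ?_
          rw [Finset.mul_sum]
  rw [dotProduct]
  calc ∑ a, w a * ((fun a b => ∑ i, c i * Ls i a b : Matrix n n ℝ) *ᵥ w) a
      = ∑ a, w a * ∑ i, c i * ∑ b, Ls i a b * w b := by
        refine Finset.sum_congr rfl fun a _ => ?_
        rw [show ((fun a b => ∑ i, c i * Ls i a b : Matrix n n ℝ) *ᵥ w) a
          = ∑ b, (∑ i, c i * Ls i a b) * w b by simp [Matrix.mulVec, dotProduct], L a]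
    _ = ∑ a, ∑ i, c i * (w a * ∑ b, Ls i a b * w b) := by
        refine Finset.sum_congr rfl fun a _ => ?_
        rw [Finset.mul_sum]
        exact Finset.sum_congr rfl fun i _ => by ring
    _ = ∑ i, ∑ a, c i * (w a * ∑ b, Ls i a b * w b) := Finset.sum_comm
    _ = ∑ i, c i * (w ⬝ᵥ (Ls i *ᵥ w)) := by
        refine Finset.sum_congr rfl fun i _ => ?_
        rw [← Finset.mul_sum]
        simp [dotProduct, Matrix.mulVec]

end aux

set_option maxHeartbeats 3200000 in
theorem stmt_9 {N M : ℕ} {Ω : Type*} {m0 : MeasurableSpace Ω} (μ : Measure Ω)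
    [IsProbabilityMeasure μ] (𝓕 : Filtration ℕ m0)
    -- the random Laplacians take values `Lval i` in a finite family, selected by `ξ t`
    {ι : Type*} [Fintype ι] [Nonempty ι] (Lval : ι → Matrix (Fin N) (Fin N) ℝ)
    (ξ : ℕ → Ω → ι)
    (hLsymm : ∀ i, (Lval i).IsSymm) (hLpsd : ∀ i, (Lval i).PosSemidef)
    (hLones : ∀ i, (Lval i) *ᵥ (fun _ => (1 : ℝ)) = 0)
    (hξmeas : ∀ t : ℕ, @Measurable Ω ι (𝓕 (t + 1)) ⊤ (ξ t))
    (hξindep : ∀ t : ℕ, ProbabilityTheory.Indep (MeasurableSpace.comap (ξ t) ⊤) (𝓕 t) μ)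
    (hξident : ∀ s t : ℕ, @ProbabilityTheory.IdentDistrib Ω Ω ι m0 m0 ⊤ (ξ s) (ξ t) μ μ)
    -- mean Laplacian connectivity
    (hmean : 0 < lambda2 (fun i j => ∫ ω, Lval (ξ 0 ω) i j ∂μ))
    -- the adapted process living in the orthogonal complement of the consensus subspace
    (z : ℕ → Ω → Fin N × Fin M → ℝ)
    (hzadp : ∀ t : ℕ, @Measurable Ω (Fin N × Fin M → ℝ) (𝓕 t) _ (z t))
    (hzperp : ∀ t : ℕ, ∀ ω, ∀ m : Fin M, (∑ n : Fin N, z t ω (n, m)) = 0)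
    (b τ2 : ℝ) (hb : 0 < b) (hτ2 : 0 < τ2) (hτ2' : τ2 ≤ 1)
    (β : ℕ → ℝ) (hβ : ∀ t : ℕ, β t = b / ((t : ℝ) + 1) ^ τ2) :
    ∃ (r : ℕ → Ω → ℝ) (c_r : ℝ) (t0 : ℕ), 0 < c_r ∧
      (∀ t : ℕ, Measurable[𝓕 (t + 1)] (r t)) ∧
      (∀ t : ℕ, ∀ ω, r t ω ∈ Set.Icc (0 : ℝ) 1) ∧
      (∀ t : ℕ, t0 ≤ t →
        (∀ᵐ ω ∂μ,
          Real.sqrt (∑ p, (((1 : Matrix (Fin N × Fin M) (Fin N × Fin M) ℝ)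
              - β t • ((Lval (ξ t ω)) ⊗ₖ (1 : Matrix (Fin M) (Fin M) ℝ))) *ᵥ (z t ω)) p ^ 2)
            ≤ (1 - r t ω) * Real.sqrt (∑ p, z t ω p ^ 2)) ∧
        (∀ᵐ ω ∂μ, c_r / ((t : ℝ) + 1) ^ τ2 ≤ (μ[r t | 𝓕 t]) ω)) := by
  classical
  letI : MeasurableSpace ι := ⊤
  set A : ι → Matrix (Fin N × Fin M) (Fin N × Fin M) ℝ :=
    fun i => (Lval i) ⊗ₖ (1 : Matrix (Fin M) (Fin M) ℝ) with hA
  have hAa : ∀ j : ι, (Lval j) ⊗ₖ (1 : Matrix (Fin M) (Fin M) ℝ) = A j := fun j => by rw [hA]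
  have hdots : ∀ (v : Fin N × Fin M → ℝ), v ⬝ᵥ v = ∑ p, v p ^ 2 := by
    intro v; simp [dotProduct, sq]
  have hLq : ∀ i (w : Fin N → ℝ), 0 ≤ w ⬝ᵥ (Lval i *ᵥ w) := by
    intro i w; simpa using (hLpsd i).dotProduct_mulVec_nonneg w
  have hAq : ∀ i (v : Fin N × Fin M → ℝ), 0 ≤ v ⬝ᵥ (A i *ᵥ v) := by
    intro i v
    rw [← hAa, quad_kron]
    exact Finset.sum_nonneg fun m _ => hLq i _
  have hAsymm : ∀ i : ι, ((Lval i) ⊗ₖ (1 : Matrix (Fin M) (Fin M) ℝ))ᵀ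
      = (Lval i) ⊗ₖ (1 : Matrix (Fin M) (Fin M) ℝ) := by
    intro i
    ext ⟨a, c⟩ ⟨a', c'⟩
    simp only [Matrix.transpose_apply, Matrix.kroneckerMap_apply, Matrix.one_apply]
    rw [(hLsymm i).apply a a']
    congr 1
    simp [eq_comm]
  have hApsd : ∀ i, (A i).PosSemidef := by
    intro i
    refine Matrix.PosSemidef.of_dotProduct_mulVec_nonneg ?_ fun x => by simpa using hAq i x
    show (A i)ᴴ = A i
    rw [Matrix.conjTranspose_eq_transpose_of_trivial, ← hAa i]
    exact hAsymm i
  set K : ℝ := ∑ i : ι, ∑ p : Fin N × Fin M, ∑ q : Fin N × Fin M, |A i p q| with hKdef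
  have hKi : ∀ i : ι, (∑ p : Fin N × Fin M, ∑ q : Fin N × Fin M, |A i p q|) ≤ K := by
    intro i
    refine Finset.single_le_sum (f := fun j => ∑ p : Fin N × Fin M, ∑ q : Fin N × Fin M, |A j p q|)
      (fun j _ => ?_) (Finset.mem_univ i)
    positivity
  have hK0 : 0 ≤ K := le_trans (by positivity) (hKi (Classical.arbitrary ι))
  have hKq : ∀ i (w : Fin N × Fin M → ℝ), w ⬝ᵥ (A i *ᵥ w) ≤ K * (w ⬝ᵥ w) := by
    intro i w
    refine le_trans (quad_abs_bound (A i) w) ?_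
    have hw : 0 ≤ w ⬝ᵥ w := by rw [hdots]; positivity
    exact mul_le_mul_of_nonneg_right (hKi i) hw
  have hmeas0 : ∀ t, Measurable (ξ t) := fun t => (hξmeas t).mono (𝓕.le (t + 1)) le_rfl
  have hsetmeas : ∀ t (i : ι), MeasurableSet (ξ t ⁻¹' {i}) :=
    fun t i => hmeas0 t (MeasurableSpace.measurableSet_top)
  set P : ι → ℝ := fun i => (μ (ξ 0 ⁻¹' {i})).toReal with hPdef
  have hP0 : ∀ i, 0 ≤ P i := fun i => ENNReal.toReal_nonneg
  have hPt : ∀ t (i : ι), μ (ξ t ⁻¹' {i}) = μ (ξ 0 ⁻¹' {i}) := by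
    intro t i
    calc μ (ξ t ⁻¹' {i}) = Measure.map (ξ t) μ {i} :=
          (Measure.map_apply (hmeas0 t) (MeasurableSpace.measurableSet_top)).symm
      _ = Measure.map (ξ 0) μ {i} := by rw [(hξident 0 t).map_eq]
      _ = μ (ξ 0 ⁻¹' {i}) := Measure.map_apply (hmeas0 0) (MeasurableSpace.measurableSet_top)
  have hind_sum : ∀ (t : ℕ) (c : ι → ℝ) (ω : Ω),
      c (ξ t ω) = ∑ i : ι, Set.indicator (ξ t ⁻¹' {i}) (fun _ => c i) ω := by
    intro t c ω
    simp [Set.indicator_apply, Finset.sum_ite_eq]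
  have hint_c : ∀ (t : ℕ) (c : ι → ℝ), ∫ ω, c (ξ t ω) ∂μ = ∑ i : ι, P i * c i := by
    intro t c
    rw [show (fun ω => c (ξ t ω)) = fun ω => ∑ i : ι, Set.indicator (ξ t ⁻¹' {i}) (fun _ => c i) ω
      from funext (hind_sum t c)]
    rw [integral_finset_sum _ (fun i _ => (integrable_const (c i)).indicator (hsetmeas t i))]
    refine Finset.sum_congr rfl fun i _ => ?_
    rw [integral_indicator_const _ (hsetmeas t i), smul_eq_mul, measureReal_def, hPt t i]
  have hPsum : ∑ i : ι, P i = 1 := by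
    have h := (hint_c 0 fun _ => (1 : ℝ)).symm
    simpa using h
  set Lb : Matrix (Fin N) (Fin N) ℝ := fun a c => ∑ i : ι, P i * Lval i a c with hLb
  have hLbmean : (fun a c => ∫ ω, Lval (ξ 0 ω) a c ∂μ) = Lb := by
    funext a c
    rw [hint_c 0 (fun i => Lval i a c), hLb]
  rw [hLbmean] at hmean
  have hLbq : ∀ w : Fin N → ℝ, w ⬝ᵥ (Lb *ᵥ w) = ∑ i : ι, P i * (w ⬝ᵥ (Lval i *ᵥ w)) := by
    intro w
    rw [hLb]
    exact quad_sum_matrix P Lval w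
  have hLbpsd : ∀ w : Fin N → ℝ, 0 ≤ w ⬝ᵥ (Lb *ᵥ w) := by
    intro w
    rw [hLbq]
    exact Finset.sum_nonneg fun i _ => mul_nonneg (hP0 i) (hLq i w)
  set c0 : ℝ := lambda2 Lb / 2 with hc0
  have hc00 : 0 < c0 := by rw [hc0]; positivity
  set g : ι → (Fin N × Fin M → ℝ) → ℝ := fun i v =>
    if v = 0 then c0 else (v ⬝ᵥ (A i *ᵥ v)) / (2 * ∑ p, v p ^ 2) with hg
  have hspos : ∀ v : Fin N × Fin M → ℝ, v ≠ 0 → 0 < ∑ p, v p ^ 2 := by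
    intro v hv
    rcases Function.ne_iff.mp hv with ⟨p, hp⟩
    have hvp : 0 < v p ^ 2 := pow_two_pos_of_ne_zero (by simpa using hp)
    calc (0:ℝ) < v p ^ 2 := hvp
      _ ≤ ∑ p, v p ^ 2 := Finset.single_le_sum (f := fun q : Fin N × Fin M => v q ^ 2)
          (fun q _ => sq_nonneg _) (Finset.mem_univ p)
  have hq_le : ∀ i (v : Fin N × Fin M → ℝ), v ⬝ᵥ (A i *ᵥ v) ≤ K * (∑ p, v p ^ 2) := by
    intro i v
    have h := hKq i v
    rwa [hdots v] at h
  have hg0 : ∀ i v, 0 ≤ g i v := by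
    intro i v
    rw [hg]
    by_cases h0 : v = 0
    · simp [h0, hc00.le]
    · simp only [if_neg h0]
      exact div_nonneg (hAq i v) (by positivity)
  have hgK : ∀ i v, g i v ≤ c0 + K := by
    intro i v
    rw [hg]
    by_cases h0 : v = 0
    · simp [h0, hK0]
    · simp only [if_neg h0]
      have hs := hspos v h0
      rw [div_le_iff₀ (by positivity)]
      nlinarith [hq_le i v, hc00.le, hK0, hs]
  have hgmean : ∀ v : Fin N × Fin M → ℝ, (∀ m : Fin M, ∑ n : Fin N, v (n, m) = 0) →
      c0 ≤ ∑ i : ι, P i * g i v := by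
    intro v hv
    by_cases h0 : v = 0
    · have : ∀ i : ι, P i * g i v = P i * c0 := by
        intro i; rw [hg]; simp [h0]
      rw [Finset.sum_congr rfl fun i _ => this i, ← Finset.sum_mul, hPsum, one_mul]
    · have hs := hspos v h0
      have hT : ∑ i : ι, P i * (v ⬝ᵥ (A i *ᵥ v)) = ∑ m : Fin M,
          (fun n => v (n, m)) ⬝ᵥ (Lb *ᵥ fun n => v (n, m)) := by
        calc ∑ i : ι, P i * (v ⬝ᵥ (A i *ᵥ v))
            = ∑ i : ι, ∑ m : Fin M, P i * ((fun n => v (n, m)) ⬝ᵥ (Lval i *ᵥ fun n => v (n, m))) := by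
              refine Finset.sum_congr rfl fun i _ => ?_
              rw [← hAa, quad_kron, Finset.mul_sum]
          _ = ∑ m : Fin M, ∑ i : ι, P i * ((fun n => v (n, m)) ⬝ᵥ (Lval i *ᵥ fun n => v (n, m))) :=
              Finset.sum_comm
          _ = ∑ m : Fin M, (fun n => v (n, m)) ⬝ᵥ (Lb *ᵥ fun n => v (n, m)) := by
              refine Finset.sum_congr rfl fun m _ => ?_
              rw [hLbq]
      have hTq : lambda2 Lb * (∑ p, v p ^ 2) ≤ ∑ i : ι, P i * (v ⬝ᵥ (A i *ᵥ v)) := by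
        rw [hT]
        have hcol : ∀ m : Fin M, lambda2 Lb * (∑ n, v (n, m) ^ 2)
            ≤ (fun n => v (n, m)) ⬝ᵥ (Lb *ᵥ fun n => v (n, m)) :=
          fun m => lambda2_le hLbpsd (hv m)
        have hsplit : (∑ p : Fin N × Fin M, v p ^ 2) = ∑ m : Fin M, ∑ n : Fin N, v (n, m) ^ 2 := by
          rw [Fintype.sum_prod_type]; exact Finset.sum_comm
        rw [hsplit, Finset.mul_sum]
        exact Finset.sum_le_sum fun m _ => hcol m
      have hgv : ∀ i : ι, P i * g i v = (P i * (v ⬝ᵥ (A i *ᵥ v))) / (2 * ∑ p, v p ^ 2) := by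
        intro i
        rw [hg]
        simp only [if_neg h0]
        ring
      rw [Finset.sum_congr rfl fun i _ => hgv i, ← Finset.sum_div]
      rw [le_div_iff₀ (by positivity)]
      rw [hc0]
      nlinarith [hTq, hs]
  set gz : ℕ → Ω → ℝ := fun t ω => g (ξ t ω) (z t ω) with hgz
  set r : ℕ → Ω → ℝ := fun t ω => min 1 (β t * gz t ω) with hr
  have hβpos : ∀ t, 0 < β t := by
    intro t
    rw [hβ]
    have : (0:ℝ) < ((t : ℝ) + 1) ^ τ2 := Real.rpow_pos_of_pos (by positivity) _
    positivity
  have hgmeas : ∀ i : ι, Measurable (g i) := by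
    intro i
    have hgi : g i = fun v => if v = 0 then c0
        else (v ⬝ᵥ (A i *ᵥ v)) / (2 * ∑ p, v p ^ 2) := by rw [hg]
    rw [hgi]
    have hquad : Measurable fun v : Fin N × Fin M → ℝ => v ⬝ᵥ (A i *ᵥ v) := by
      simp only [dotProduct, Matrix.mulVec]
      exact Finset.measurable_sum _ fun p _ => (measurable_pi_apply p).mul
        (Finset.measurable_sum _ fun q _ => (by fun_prop))
    have hden : Measurable fun v : Fin N × Fin M → ℝ => 2 * ∑ p, v p ^ 2 :=
      (Finset.measurable_sum _ fun p _ => (measurable_pi_apply p).pow_const 2).const_mul 2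
    exact Measurable.ite (measurableSet_eq) measurable_const (hquad.div hden)
  have hgzmeas : ∀ t, Measurable[𝓕 (t + 1)] (gz t) := by
    intro t
    have hz' : Measurable[𝓕 (t + 1)] (z t) := (hzadp t).mono (𝓕.mono (Nat.le_succ t)) le_rfl
    have hrep : gz t = fun ω => ∑ i : ι, if ξ t ω = i then g i (z t ω) else 0 := by
      funext ω
      rw [hgz]
      simp [Finset.sum_ite_eq]
    rw [hrep]
    refine Finset.measurable_sum _ fun i _ => Measurable.ite ?_ ((hgmeas i).comp hz') measurable_const
    exact (hξmeas t) (MeasurableSpace.measurableSet_top : MeasurableSet[⊤] {i})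
  have hrmeas : ∀ t, Measurable[𝓕 (t + 1)] (r t) := by
    intro t
    exact measurable_const.min ((hgzmeas t).const_mul (β t))
  have hrIcc : ∀ t ω, r t ω ∈ Set.Icc (0 : ℝ) 1 := by
    intro t ω
    constructor
    · exact le_min (by norm_num) (mul_nonneg (hβpos t).le (hg0 _ _))
    · exact min_le_left _ _
  have hD0 : 0 < K + c0 + 2 := by linarith
  have htend : Tendsto (fun t : ℕ => ((t : ℝ) + 1) ^ τ2) atTop atTop :=
    (tendsto_rpow_atTop hτ2).comp
      (tendsto_atTop_add_const_right atTop 1 tendsto_natCast_atTop_atTop)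
  obtain ⟨t0, ht0⟩ := eventually_atTop.mp (htend.eventually_ge_atTop (b * (K + c0 + 2)))
  have hβD : ∀ t, t0 ≤ t → β t * (K + c0 + 2) ≤ 1 := by
    intro t ht
    have hx : (0:ℝ) < ((t : ℝ) + 1) ^ τ2 := Real.rpow_pos_of_pos (by positivity) _
    rw [hβ, div_mul_eq_mul_div, div_le_one hx]
    exact ht0 t ht
  have hreq : ∀ t, t0 ≤ t → ∀ ω, r t ω = β t * gz t ω := by
    intro t ht ω
    have hgb : gz t ω ≤ c0 + K := hgK (ξ t ω) (z t ω)
    have h1 : β t * gz t ω ≤ 1 := by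
      have h2 : β t * gz t ω ≤ β t * (K + c0 + 2) :=
        mul_le_mul_of_nonneg_left (by linarith) (hβpos t).le
      linarith [hβD t ht]
    rw [hr]
    exact min_eq_right h1
  refine ⟨r, b * c0, t0, by positivity, hrmeas, hrIcc, ?_⟩
  intro t ht
  constructor
  · -- contraction, pointwise
    refine ae_of_all _ fun ω => ?_
    rw [hAa (ξ t ω)]
    by_cases h0 : z t ω = 0
    · simp [h0]
    · have hs := hspos (z t ω) h0
      set v := z t ω with hv
      set i := ξ t ω with hi
      have hq0 : 0 ≤ v ⬝ᵥ (A i *ᵥ v) := hAq i v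
      have hqK : v ⬝ᵥ (A i *ᵥ v) ≤ K * (∑ p, v p ^ 2) := hq_le i v
      have hrw : r t ω = β t * ((v ⬝ᵥ (A i *ᵥ v)) / (2 * ∑ p, v p ^ 2)) := by
        rw [hreq t ht ω, hgz, hg]
        simp only [← hv, ← hi, if_neg h0]
      have hmv : ∀ p, (((1 : Matrix (Fin N × Fin M) (Fin N × Fin M) ℝ) - β t • (A i)) *ᵥ v) p
          = v p - β t * ((A i *ᵥ v) p) := by
        intro p
        rw [Matrix.sub_mulVec, Matrix.smul_mulVec, Matrix.one_mulVec]
        simp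
      have hexp : ∑ p, (((1 : Matrix (Fin N × Fin M) (Fin N × Fin M) ℝ) - β t • (A i)) *ᵥ v) p ^ 2
          = (∑ p, v p ^ 2) - 2 * β t * (v ⬝ᵥ (A i *ᵥ v))
            + β t ^ 2 * (∑ p, ((A i *ᵥ v) p) ^ 2) := by
        have h1 : ∀ p, (((1 : Matrix (Fin N × Fin M) (Fin N × Fin M) ℝ) - β t • (A i)) *ᵥ v) p ^ 2
            = v p ^ 2 - 2 * β t * (v p * (A i *ᵥ v) p) + β t ^ 2 * ((A i *ᵥ v) p) ^ 2 := by
          intro p; rw [hmv p]; ring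
        rw [Finset.sum_congr rfl fun p _ => h1 p, Finset.sum_add_distrib,
          Finset.sum_sub_distrib, ← Finset.mul_sum, ← Finset.mul_sum]
        rfl
      have hn2K : (∑ p, ((A i *ᵥ v) p) ^ 2) ≤ K * (v ⬝ᵥ (A i *ᵥ v)) := by
        have h := mulVec_sq_le (hApsd i) (hKq i) v
        rwa [hdots (A i *ᵥ v)] at h
      have hβK : β t * K ≤ 1 := by
        have h := hβD t ht
        nlinarith [hβpos t, hc00]
      have hr1 : r t ω ≤ 1 := (hrIcc t ω).2
      have hrnn : 0 ≤ 1 - r t ω := by linarith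
      have hkey : ∑ p, (((1 : Matrix (Fin N × Fin M) (Fin N × Fin M) ℝ) - β t • (A i)) *ᵥ v) p ^ 2
          ≤ (1 - r t ω) ^ 2 * (∑ p, v p ^ 2) := by
        rw [hexp, hrw]
        have hfrac : (1 - β t * ((v ⬝ᵥ (A i *ᵥ v)) / (2 * ∑ p, v p ^ 2))) ^ 2 * (∑ p, v p ^ 2)
            = (∑ p, v p ^ 2) - β t * (v ⬝ᵥ (A i *ᵥ v))
              + (β t * (v ⬝ᵥ (A i *ᵥ v))) ^ 2 / (4 * ∑ p, v p ^ 2) := by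
          field_simp
          ring
        rw [hfrac]
        have h1 : β t ^ 2 * (∑ p, ((A i *ᵥ v) p) ^ 2) ≤ β t * (v ⬝ᵥ (A i *ᵥ v)) := by
          nlinarith [mul_le_mul_of_nonneg_left hn2K (sq_nonneg (β t)),
            mul_nonneg (mul_nonneg (hβpos t).le hq0) (sub_nonneg.mpr hβK), hβpos t]
        have h2 : 0 ≤ (β t * (v ⬝ᵥ (A i *ᵥ v))) ^ 2 / (4 * ∑ p, v p ^ 2) := by positivity
        linarith
      calc Real.sqrt (∑ p, (((1 : Matrix (Fin N × Fin M) (Fin N × Fin M) ℝ)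
              - β t • (A i)) *ᵥ v) p ^ 2)
          ≤ Real.sqrt ((1 - r t ω) ^ 2 * (∑ p, v p ^ 2)) := Real.sqrt_le_sqrt hkey
        _ = (1 - r t ω) * Real.sqrt (∑ p, v p ^ 2) := by
            rw [Real.sqrt_mul (sq_nonneg _), Real.sqrt_sq hrnn]
  · -- conditional expectation bound
    set ind : ι → Ω → ℝ := fun i => (ξ t ⁻¹' {i}).indicator (fun _ => (1 : ℝ)) with hind
    set φ : ι → Ω → ℝ := fun i ω => g i (z t ω) with hφ
    have hdecomp : r t = β t • (∑ i : ι, φ i * ind i) := by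
      funext ω
      rw [hreq t ht ω]
      simp only [Pi.smul_apply, Finset.sum_apply, Pi.mul_apply, smul_eq_mul]
      congr 1
      rw [hgz]
      simp only [hind, hφ, Set.indicator_apply, Set.mem_preimage, Set.mem_singleton_iff,
        mul_ite, mul_one, mul_zero]
      rw [Finset.sum_ite_eq]
      simp
    have hφmeas : ∀ i, StronglyMeasurable[𝓕 t] (φ i) := fun i =>
      (Measurable.comp (hgmeas i) (hzadp t)).stronglyMeasurable
    have hindmeas : ∀ i, Measurable (ind i) := fun i =>
      measurable_const.indicator (hsetmeas t i)
    have hφbound : ∀ i ω, |φ i ω| ≤ c0 + K := by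
      intro i ω
      rw [hφ, abs_of_nonneg (hg0 _ _)]
      exact hgK _ _
    have hindbound : ∀ i ω, |ind i ω| ≤ 1 := by
      intro i ω
      rw [hind]
      simp only [Set.indicator_apply]
      split_ifs <;> norm_num
    have hint_ind : ∀ i, Integrable (ind i) μ := fun i =>
      (integrable_const (1 : ℝ)).indicator (hsetmeas t i)
    have hint_prod : ∀ i, Integrable (φ i * ind i) μ := by
      intro i
      refine ⟨(((Measurable.comp (hgmeas i) ((hzadp t).mono (𝓕.le t) le_rfl)).mul
        (hindmeas i))).aestronglyMeasurable, ?_⟩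
      refine HasFiniteIntegral.of_bounded (C := c0 + K) (ae_of_all _ fun ω => ?_)
      have h1 := hφbound i ω
      have h2 := hindbound i ω
      have : ‖(φ i * ind i) ω‖ = |φ i ω| * |ind i ω| := by
        simp [Real.norm_eq_abs, abs_mul]
      rw [this]
      nlinarith [abs_nonneg (φ i ω), abs_nonneg (ind i ω), hc00.le, hK0]
    have hcond1 : μ[r t | 𝓕 t] =ᵐ[μ] β t • μ[(∑ i : ι, φ i * ind i) | 𝓕 t] := by
      rw [hdecomp]
      exact condExp_smul (β t) _ _
    have hcond2 : μ[(∑ i : ι, φ i * ind i) | 𝓕 t] =ᵐ[μ] ∑ i : ι, μ[φ i * ind i | 𝓕 t] :=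
      condExp_finsetSum (fun i _ => hint_prod i) _
    have hcond3 : ∀ᵐ ω ∂μ, ∀ i : ι, (μ[φ i * ind i | 𝓕 t]) ω = φ i ω * (μ[ind i | 𝓕 t]) ω :=
      ae_all_iff.2 fun i => condExp_mul_of_stronglyMeasurable_left (hφmeas i) (hint_prod i) (hint_ind i)
    have hcond4 : ∀ᵐ ω ∂μ, ∀ i : ι, (μ[ind i | 𝓕 t]) ω = P i := by
      refine ae_all_iff.2 fun i => ?_
      have h1 : μ[ind i | 𝓕 t] =ᵐ[μ] fun _ => ∫ ω, ind i ω ∂μ :=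
        condExp_indep_eq (hmeas0 t).comap_le (𝓕.le t)
          (stronglyMeasurable_const.indicator ⟨{i}, MeasurableSpace.measurableSet_top, rfl⟩)
          (hξindep t)
      have h2 : ∫ ω, ind i ω ∂μ = P i := by
        rw [hind]
        simp only
        rw [integral_indicator_const _ (hsetmeas t i), smul_eq_mul, mul_one, measureReal_def, hPt t i]
      rw [h2] at h1
      exact h1
    have hx : (0:ℝ) < ((t : ℝ) + 1) ^ τ2 := Real.rpow_pos_of_pos (by positivity) _
    filter_upwards [hcond1, hcond2, hcond3, hcond4] with ω h1 h2 h3 h4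
    have hval : (μ[r t | 𝓕 t]) ω = β t * ∑ i : ι, φ i ω * P i := by
      rw [h1]
      simp only [Pi.smul_apply, smul_eq_mul]
      rw [h2]
      simp only [Finset.sum_apply]
      congr 1
      refine Finset.sum_congr rfl fun i _ => ?_
      rw [h3 i, h4 i]
    rw [hval]
    have hg' : c0 ≤ ∑ i : ι, φ i ω * P i := by
      have h := hgmean (z t ω) (hzperp t ω)
      calc c0 ≤ ∑ i : ι, P i * g i (z t ω) := h
        _ = ∑ i : ι, φ i ω * P i := Finset.sum_congr rfl fun i _ => by rw [hφ]; ring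
    calc b * c0 / ((t : ℝ) + 1) ^ τ2 = β t * c0 := by rw [hβ]; ring
      _ ≤ β t * ∑ i : ι, φ i ω * P i := mul_le_mul_of_nonneg_left hg' (hβpos t).le
end

section
/- (Fabian's rate lemma.) Let $\{b_t\}$ be a sequence of nonnegative reals satisfying $b_{t+1} \le (1 - c/(t+1)) b_t + d_t (t+1)^{-\tau}$ for all $t$ large enough, where $c > \tau > 0$ and $\sum_{t \ge 0} |d_t| < \infty$. Then $\limsup_{t \to \infty} (t+1)^{\tau} b_t < \infty$. -/
open Filter

theorem stmt_10 (b d : ℕ → ℝ) (c τ : ℝ) (hτ : 0 < τ) (hcτ : τ < c)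
    (hbnn : ∀ t : ℕ, 0 ≤ b t)
    (hd : Summable (fun t : ℕ => |d t|))
    (hrec : ∃ t0 : ℕ, ∀ t : ℕ, t0 ≤ t →
      b (t + 1) ≤ (1 - c / ((t : ℝ) + 1)) * b t + d t * ((t : ℝ) + 1) ^ (-τ)) :
    BddAbove (Set.range (fun t : ℕ => ((t : ℝ) + 1) ^ τ * b t)) := by
  obtain ⟨t0, hrec⟩ := hrec
  set a : ℕ → ℝ := fun t => ((t : ℝ) + 1) ^ τ * b t with ha
  have hanonneg : ∀ t, 0 ≤ a t := fun t =>
    mul_nonneg (Real.rpow_nonneg (by positivity) _) (hbnn t)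
  have key : ∀ t : ℕ, t0 ≤ t → a (t + 1) ≤ a t + 2 ^ τ * |d t| := by
    intro t ht
    have h1 : (0:ℝ) < (t:ℝ) + 1 := by positivity
    have h2 : (0:ℝ) < (t:ℝ) + 2 := by positivity
    have hb := hrec t ht
    have hA : ((t:ℝ)+2) ^ τ * (1 - c / ((t:ℝ)+1)) ≤ ((t:ℝ)+1) ^ τ := by
      rcases le_or_gt (1 - c / ((t:ℝ)+1)) 0 with hs | hs
      · exact le_trans (mul_nonpos_of_nonneg_of_nonpos (Real.rpow_nonneg h2.le _) hs)
          (Real.rpow_nonneg h1.le _)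
      · have e1 : ((t:ℝ)+2) ^ τ ≤ ((t:ℝ)+1) ^ τ * Real.exp (τ / ((t:ℝ)+1)) := by
          have hfac : ((t:ℝ)+2) = ((t:ℝ)+1) * (1 + 1/((t:ℝ)+1)) := by
            field_simp
            ring
          rw [hfac, Real.mul_rpow h1.le (by positivity)]
          refine mul_le_mul_of_nonneg_left ?_ (Real.rpow_nonneg h1.le _)
          have h3 : (1 : ℝ) + 1/((t:ℝ)+1) ≤ Real.exp (1/((t:ℝ)+1)) := by
            have := Real.add_one_le_exp (1/((t:ℝ)+1)); linarith
          calc (1 + 1/((t:ℝ)+1)) ^ τ ≤ (Real.exp (1/((t:ℝ)+1))) ^ τ :=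
                Real.rpow_le_rpow (by positivity) h3 hτ.le
            _ = Real.exp (1/((t:ℝ)+1) * τ) := (Real.exp_mul _ _).symm
            _ = Real.exp (τ / ((t:ℝ)+1)) := by ring_nf
        have e2 : 1 - c / ((t:ℝ)+1) ≤ Real.exp (-(c / ((t:ℝ)+1))) := by
          have := Real.add_one_le_exp (-(c / ((t:ℝ)+1))); linarith
        calc ((t:ℝ)+2) ^ τ * (1 - c / ((t:ℝ)+1))
            ≤ (((t:ℝ)+1) ^ τ * Real.exp (τ / ((t:ℝ)+1))) * Real.exp (-(c / ((t:ℝ)+1))) :=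
              mul_le_mul e1 e2 hs.le (by positivity)
          _ = ((t:ℝ)+1) ^ τ * Real.exp (τ / ((t:ℝ)+1) + -(c / ((t:ℝ)+1))) := by
              rw [Real.exp_add]; ring
          _ ≤ ((t:ℝ)+1) ^ τ * 1 := by
              refine mul_le_mul_of_nonneg_left ?_ (Real.rpow_nonneg h1.le _)
              rw [Real.exp_le_one_iff]
              have : τ / ((t:ℝ)+1) ≤ c / ((t:ℝ)+1) := by gcongr
              linarith
          _ = ((t:ℝ)+1) ^ τ := mul_one _
    have hB : ((t:ℝ)+2) ^ τ * ((t:ℝ)+1) ^ (-τ) ≤ 2 ^ τ := by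
      rw [Real.rpow_neg h1.le, ← div_eq_mul_inv, ← Real.div_rpow h2.le h1.le]
      refine Real.rpow_le_rpow (by positivity) ?_ hτ.le
      rw [div_le_iff₀ h1]; linarith
    have hBnn : 0 ≤ ((t:ℝ)+2) ^ τ * ((t:ℝ)+1) ^ (-τ) := by positivity
    have hstep1 : a (t+1) ≤ ((t:ℝ)+2) ^ τ * ((1 - c / ((t : ℝ) + 1)) * b t + d t * ((t : ℝ) + 1) ^ (-τ)) := by
      have : a (t+1) = ((t:ℝ)+2) ^ τ * b (t+1) := by
        simp only [ha]
        push_cast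
        ring_nf
      rw [this]
      exact mul_le_mul_of_nonneg_left hb (Real.rpow_nonneg h2.le _)
    refine hstep1.trans ?_
    have expand : ((t:ℝ)+2) ^ τ * ((1 - c / ((t : ℝ) + 1)) * b t + d t * ((t : ℝ) + 1) ^ (-τ))
        = (((t:ℝ)+2) ^ τ * (1 - c / ((t:ℝ)+1))) * b t
          + (((t:ℝ)+2) ^ τ * ((t:ℝ)+1) ^ (-τ)) * d t := by ring
    rw [expand]
    have hT1 : (((t:ℝ)+2) ^ τ * (1 - c / ((t:ℝ)+1))) * b t ≤ a t :=
      mul_le_mul_of_nonneg_right hA (hbnn t)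
    have hT2 : (((t:ℝ)+2) ^ τ * ((t:ℝ)+1) ^ (-τ)) * d t ≤ 2 ^ τ * |d t| := by
      calc (((t:ℝ)+2) ^ τ * ((t:ℝ)+1) ^ (-τ)) * d t
          ≤ (((t:ℝ)+2) ^ τ * ((t:ℝ)+1) ^ (-τ)) * |d t| :=
            mul_le_mul_of_nonneg_left (le_abs_self _) hBnn
        _ ≤ 2 ^ τ * |d t| := mul_le_mul_of_nonneg_right hB (abs_nonneg _)
    linarith
  set S : ℝ := ∑' t, |d t| with hS
  have hSnn : 0 ≤ S := tsum_nonneg (fun _ => abs_nonneg _)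
  have htail : ∀ k : ℕ, a (t0 + k) ≤ a t0 + 2 ^ τ * S := by
    have haux : ∀ k : ℕ, a (t0 + k) ≤ a t0 + 2 ^ τ * ∑ i ∈ Finset.range k, |d (t0 + i)| := by
      intro k
      induction k with
      | zero => simp
      | succ k ih =>
        have := key (t0 + k) (Nat.le_add_right _ _)
        rw [Finset.sum_range_succ]
        have : a (t0 + (k+1)) ≤ a (t0 + k) + 2 ^ τ * |d (t0 + k)| := by
          have h := key (t0 + k) (Nat.le_add_right _ _)
          simpa [add_assoc] using h
        nlinarith [Real.rpow_nonneg (by norm_num : (0:ℝ) ≤ 2) τ]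
    intro k
    refine (haux k).trans ?_
    have hle : ∑ i ∈ Finset.range k, |d (t0 + i)| ≤ S := by
      rw [show ∑ i ∈ Finset.range k, |d (t0 + i)| = ∑ j ∈ Finset.Ico t0 (t0 + k), |d j| by
        rw [Finset.sum_Ico_eq_sum_range]; simp]
      exact Summable.sum_le_tsum _ (fun i _ => abs_nonneg _) hd
    nlinarith [Real.rpow_nonneg (by norm_num : (0:ℝ) ≤ 2) τ]
  refine ⟨(∑ i ∈ Finset.range (t0 + 1), a i) + 2 ^ τ * S, ?_⟩
  rintro x ⟨n, rfl⟩
  have hC : ∀ n : ℕ, a n ≤ (∑ i ∈ Finset.range (t0 + 1), a i) + 2 ^ τ * S := by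
    intro n
    rcases le_or_gt n t0 with hn | hn
    · have h1 : a n ≤ ∑ i ∈ Finset.range (t0 + 1), a i :=
        Finset.single_le_sum (fun i _ => hanonneg i) (Finset.mem_range.mpr (Nat.lt_succ_of_le hn))
      nlinarith [Real.rpow_nonneg (by norm_num : (0:ℝ) ≤ 2) τ]
    · obtain ⟨k, rfl⟩ := Nat.exists_eq_add_of_le hn.le
      have h1 := htail k
      have h2 : a t0 ≤ ∑ i ∈ Finset.range (t0 + 1), a i :=
        Finset.single_le_sum (fun i _ => hanonneg i) (Finset.mem_range.mpr (Nat.lt_succ_self _))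
      linarith
  exact hC n
end

section
/- Let $\bar{L}$ be a Laplacian matrix on $N$ vertices with $\lambda_2(\bar{L}) > 0$, let $\mathcal{D}$ be a symmetric $NM \times NM$ matrix such that $z_{\mathcal{C}}^T \mathcal{D} z_{\mathcal{C}} = \|z_{\mathcal{C}}\|^2$ for all $z$ (where $z_{\mathcal{C}}$ is the projection onto the consensus subspace $\mathcal{C}$), and let $c_1 > 0$ satisfy $z_{\mathcal{C}^\perp}^T \mathcal{D} z_{\mathcal{C}^\perp} \ge -c_1 \|z_{\mathcal{C}^\perp}\|^2$ and $z_{\mathcal{C}}^T \mathcal{D} z_{\mathcal{C}^\perp} \ge -c_1 \|z_{\mathcal{C}}\| \|z_{\mathcal{C}^\perp}\|$ for all $z$. If $\gamma > 0$ satisfies $\gamma \lambda_2(\bar{L}) - c_1 > c_1^2$, then $z^T(\gamma \, \bar{L} \otimes I_M + \mathcal{D}) z > 0$ for all nonzero $z \in \mathbb{R}^{NM}$. -/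
open Matrix BigOperators Kronecker

/-- Orthogonal projection of `z ∈ ℝ^{NM}` onto the consensus subspace
`𝒞 = {𝟏_N ⊗ a : a ∈ ℝ^M}`. -/
noncomputable def projC {N M : ℕ} (z : Fin N × Fin M → ℝ) : Fin N × Fin M → ℝ :=
  fun p => (∑ n : Fin N, z (n, p.2)) / (N : ℝ)

/-- Projection onto the orthogonal complement of the consensus subspace. -/
noncomputable def projCperp {N M : ℕ} (z : Fin N × Fin M → ℝ) : Fin N × Fin M → ℝ :=
  z - projC z

lemma symmdot {n : Type*} [Fintype n] {A : Matrix n n ℝ} (hA : A.IsSymm) (u v : n → ℝ) :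
    u ⬝ᵥ (A *ᵥ v) = v ⬝ᵥ (A *ᵥ u) := by
  rw [Matrix.dotProduct_mulVec, ← Matrix.mulVec_transpose, hA.eq, dotProduct_comm]

lemma rayleigh {N : ℕ} (L : Matrix (Fin N) (Fin N) ℝ) (hpsd : L.PosSemidef)
    (w : Fin N → ℝ) (hw : ∑ i, w i = 0) :
    lambda2 L * (∑ i, w i ^ 2) ≤ w ⬝ᵥ (L *ᵥ w) := by
  have hs0 : 0 ≤ ∑ i, w i ^ 2 := Finset.sum_nonneg fun i _ => sq_nonneg _
  rcases eq_or_lt_of_le hs0 with h | h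
  · have hz : ∀ i, w i = 0 := by
      intro i
      have := (Finset.sum_eq_zero_iff_of_nonneg (fun i _ => sq_nonneg (w i))).mp h.symm i
        (Finset.mem_univ i)
      exact pow_eq_zero_iff two_ne_zero |>.mp this
    have hw0 : w = 0 := funext hz
    rw [hw0]
    simp
  · set s := ∑ i, w i ^ 2 with hs
    have hts : 0 < Real.sqrt s := Real.sqrt_pos.mpr h
    set u : Fin N → ℝ := (Real.sqrt s)⁻¹ • w with hu
    have hsq : (Real.sqrt s) ^ 2 = s := Real.sq_sqrt hs0
    have h1 : ∑ i, u i ^ 2 = 1 := by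
      simp only [hu, Pi.smul_apply, smul_eq_mul, mul_pow, ← Finset.mul_sum, ← hs]
      rw [inv_pow, hsq, inv_mul_cancel₀ (ne_of_gt h)]
    have h2 : ∑ i, u i = 0 := by
      simp only [hu, Pi.smul_apply, smul_eq_mul, ← Finset.mul_sum, hw, mul_zero]
    have hbdd : BddBelow {x : ℝ | ∃ z : Fin N → ℝ,
        (∑ i, z i ^ 2) = 1 ∧ (∑ i, z i) = 0 ∧ x = z ⬝ᵥ (L *ᵥ z)} := by
      refine ⟨0, ?_⟩
      rintro x ⟨z, _, _, rfl⟩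
      simpa using hpsd.dotProduct_mulVec_nonneg z
    have hle : lambda2 L ≤ u ⬝ᵥ (L *ᵥ u) := csInf_le hbdd ⟨u, h1, h2, rfl⟩
    have huLu : u ⬝ᵥ (L *ᵥ u) = s⁻¹ * (w ⬝ᵥ (L *ᵥ w)) := by
      rw [hu, Matrix.mulVec_smul, smul_dotProduct, dotProduct_smul, smul_eq_mul, smul_eq_mul,
        ← mul_assoc,
        show ((Real.sqrt s)⁻¹ * (Real.sqrt s)⁻¹ : ℝ) = s⁻¹ by
          rw [← mul_inv, Real.mul_self_sqrt hs0]]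
    rw [huLu] at hle
    have := mul_le_mul_of_nonneg_right hle h.le
    rw [mul_comm s⁻¹, mul_assoc, inv_mul_cancel₀ (ne_of_gt h), mul_one] at this
    linarith

lemma kron_projC {N M : ℕ} (Lbar : Matrix (Fin N) (Fin N) ℝ)
    (hones : Lbar *ᵥ (fun _ => (1 : ℝ)) = 0) (z : Fin N × Fin M → ℝ) :
    (Lbar ⊗ₖ (1 : Matrix (Fin M) (Fin M) ℝ)) *ᵥ projC z = 0 := by
  funext p
  obtain ⟨i, m⟩ := p
  have h0 : ∑ j, Lbar i j = 0 := by
    have := congrFun hones i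
    simpa [Matrix.mulVec, dotProduct] using this
  simp only [Matrix.mulVec, dotProduct, Matrix.kroneckerMap_apply, Fintype.sum_prod_type,
    Matrix.one_apply, projC, Pi.zero_apply, mul_ite, mul_one, mul_zero, ite_mul, zero_mul,
    Finset.sum_ite_eq, Finset.mem_univ, if_true]
  rw [← Finset.sum_mul, h0, zero_mul]

lemma kron_quad {N M : ℕ} (Lbar : Matrix (Fin N) (Fin N) ℝ) (v : Fin N × Fin M → ℝ) :
    v ⬝ᵥ ((Lbar ⊗ₖ (1 : Matrix (Fin M) (Fin M) ℝ)) *ᵥ v)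
      = ∑ m : Fin M, (fun i => v (i, m)) ⬝ᵥ (Lbar *ᵥ fun i => v (i, m)) := by
  simp only [dotProduct, Matrix.mulVec, Matrix.kroneckerMap_apply, Fintype.sum_prod_type,
    Matrix.one_apply, mul_ite, mul_one, mul_zero, ite_mul, zero_mul,
    Finset.sum_ite_eq, Finset.mem_univ, if_true]
  rw [Finset.sum_comm]

lemma perp_colsum {N M : ℕ} (hN : 0 < N) (z : Fin N × Fin M → ℝ) (m : Fin M) :
    ∑ i, projCperp z (i, m) = 0 := by
  have hNne : (N : ℝ) ≠ 0 := Nat.cast_ne_zero.mpr hN.ne'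
  simp only [projCperp, Pi.sub_apply, projC, Finset.sum_sub_distrib]
  rw [Finset.sum_const, Finset.card_univ, Fintype.card_fin, nsmul_eq_mul,
    mul_div_cancel₀ _ hNne, sub_self]

set_option maxHeartbeats 1000000 in
theorem stmt_14 {N M : ℕ} (hN : 0 < N) (Lbar : Matrix (Fin N) (Fin N) ℝ)
    (hsymm : Lbar.IsSymm) (hpsd : Lbar.PosSemidef)
    (hones : Lbar *ᵥ (fun _ => (1 : ℝ)) = 0)
    (hlam : 0 < lambda2 Lbar)
    (D : Matrix (Fin N × Fin M) (Fin N × Fin M) ℝ) (hDsymm : D.IsSymm)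
    (hDC : ∀ z : Fin N × Fin M → ℝ, projC z ⬝ᵥ (D *ᵥ projC z) = ∑ p, projC z p ^ 2)
    (c1 : ℝ) (hc1 : 0 < c1)
    (hDperp : ∀ z : Fin N × Fin M → ℝ,
      -c1 * (∑ p, projCperp z p ^ 2) ≤ projCperp z ⬝ᵥ (D *ᵥ projCperp z))
    (hDcross : ∀ z : Fin N × Fin M → ℝ,
      -c1 * Real.sqrt (∑ p, projC z p ^ 2) * Real.sqrt (∑ p, projCperp z p ^ 2)
        ≤ projC z ⬝ᵥ (D *ᵥ projCperp z))
    (γ : ℝ) (hγ : 0 < γ) (hdisc : c1 ^ 2 < γ * lambda2 Lbar - c1) :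
    ∀ z : Fin N × Fin M → ℝ, z ≠ 0 →
      0 < z ⬝ᵥ ((γ • (Lbar ⊗ₖ (1 : Matrix (Fin M) (Fin M) ℝ)) + D) *ᵥ z) := by
  intro z hz
  set K : Matrix (Fin N × Fin M) (Fin N × Fin M) ℝ := Lbar ⊗ₖ (1 : Matrix (Fin M) (Fin M) ℝ)
    with hKdef
  have hKsymm : K.IsSymm := by
    rw [Matrix.IsSymm, hKdef, ← Matrix.kroneckerMap_transpose, hsymm.eq, Matrix.transpose_one]
  have hB := hDC z
  have hP := hDperp z
  have hCr := hDcross z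
  have hK0 : K *ᵥ projC z = 0 := kron_projC Lbar hones z
  have hKrq : lambda2 Lbar * (∑ p, projCperp z p ^ 2) ≤ projCperp z ⬝ᵥ (K *ᵥ projCperp z) := by
    rw [hKdef, kron_quad]
    rw [show (∑ p, projCperp z p ^ 2)
        = ∑ m : Fin M, ∑ i : Fin N, projCperp z (i, m) ^ 2 from Fintype.sum_prod_type_right _,
      Finset.mul_sum]
    exact Finset.sum_le_sum fun m _ => rayleigh Lbar hpsd _ (perp_colsum hN z m)
  set zC := projC z with hzC
  set zP := projCperp z with hzP
  have hzeq : zC + zP = z := by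
    funext p
    simp [hzP, hzC, projCperp]
  -- decompose the quadratic forms
  have e0 : z ⬝ᵥ ((γ • K + D) *ᵥ z) = γ * (z ⬝ᵥ (K *ᵥ z)) + z ⬝ᵥ (D *ᵥ z) := by
    rw [Matrix.add_mulVec, dotProduct_add, Matrix.smul_mulVec, dotProduct_smul, smul_eq_mul]
  have hcross0 : zC ⬝ᵥ (K *ᵥ zP) = 0 := by
    rw [symmdot hKsymm, hK0, dotProduct_zero]
  have e1 : z ⬝ᵥ (K *ᵥ z) = zP ⬝ᵥ (K *ᵥ zP) := by
    conv_lhs => rw [← hzeq]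
    rw [Matrix.mulVec_add, hK0, zero_add, add_dotProduct, hcross0, zero_add]
  have e2 : z ⬝ᵥ (D *ᵥ z)
      = zC ⬝ᵥ (D *ᵥ zC) + 2 * (zC ⬝ᵥ (D *ᵥ zP)) + zP ⬝ᵥ (D *ᵥ zP) := by
    conv_lhs => rw [← hzeq]
    rw [Matrix.mulVec_add, dotProduct_add, add_dotProduct, add_dotProduct,
      symmdot hDsymm zP zC]
    ring
  -- introduce x, y
  have hxs : 0 ≤ ∑ p, zC p ^ 2 := Finset.sum_nonneg fun p _ => sq_nonneg _
  have hys : 0 ≤ ∑ p, zP p ^ 2 := Finset.sum_nonneg fun p _ => sq_nonneg _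
  set x := Real.sqrt (∑ p, zC p ^ 2) with hxdef
  set y := Real.sqrt (∑ p, zP p ^ 2) with hydef
  have hx2 : x ^ 2 = ∑ p, zC p ^ 2 := Real.sq_sqrt hxs
  have hy2 : y ^ 2 = ∑ p, zP p ^ 2 := Real.sq_sqrt hys
  have hx0 : 0 ≤ x := Real.sqrt_nonneg _
  have hy0 : 0 ≤ y := Real.sqrt_nonneg _
  have hxy : 0 < x ^ 2 + y ^ 2 := by
    rcases lt_or_eq_of_le (add_nonneg (sq_nonneg x) (sq_nonneg y)) with h | h
    · exact h
    exfalso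
    apply hz
    have hxz : ∑ p, zC p ^ 2 = 0 := by nlinarith [sq_nonneg x, sq_nonneg y]
    have hyz : ∑ p, zP p ^ 2 = 0 := by nlinarith [sq_nonneg x, sq_nonneg y]
    funext p
    have h1 : zC p = 0 := pow_eq_zero_iff two_ne_zero |>.mp
      ((Finset.sum_eq_zero_iff_of_nonneg fun q _ => sq_nonneg (zC q)).mp hxz p (Finset.mem_univ p))
    have h2 : zP p = 0 := pow_eq_zero_iff two_ne_zero |>.mp
      ((Finset.sum_eq_zero_iff_of_nonneg fun q _ => sq_nonneg (zP q)).mp hyz p (Finset.mem_univ p))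
    have := congrFun hzeq p
    simp only [Pi.add_apply, h1, h2, add_zero] at this
    rw [← this]
    rfl
  -- key positivity of the quadratic
  have key : 0 < (γ * lambda2 Lbar - c1) * y ^ 2 - 2 * c1 * x * y + x ^ 2 := by
    rcases eq_or_lt_of_le hy0 with h | h
    · have hx' : 0 < x ^ 2 := by nlinarith
      rw [← h]
      simpa using hx'
    · nlinarith [sq_nonneg (x - c1 * y), mul_pos (sub_pos.mpr hdisc) (mul_pos h h)]
  -- assemble
  have hA : γ * (lambda2 Lbar * y ^ 2) ≤ γ * (zP ⬝ᵥ (K *ᵥ zP)) := by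
    rw [hy2]
    exact mul_le_mul_of_nonneg_left hKrq hγ.le
  rw [e0, e1, e2, hB, ← hx2]
  rw [← hy2] at hP
  nlinarith [hCr, hP, hA, key]
end

section
/- Under the same setup: let $\bar{L}$ be a Laplacian with $\lambda_2(\bar{L}) > 0$, let $\varepsilon \in (0,1)$, and let $\widetilde{\mathcal{D}}$ be a symmetric matrix with $\|\widetilde{\mathcal{D}} - \mathcal{D}\| \le \varepsilon$ where $\mathcal{D}$ satisfies $z_{\mathcal{C}}^T \mathcal{D} z_{\mathcal{C}} = \|z_{\mathcal{C}}\|^2$ and the $c_1$-bounds as above. If $\gamma > 0$ satisfies $\tfrac{\gamma}{2} \lambda_2(\bar{L}) \ge c_1 + \varepsilon + c_1^2/(1-\varepsilon)$, then for all $z \in \mathbb{R}^{NM}$: $z^T (\gamma \, \bar{L} \otimes I_M + \widetilde{\mathcal{D}}) z \ge \tfrac{\gamma}{2} \lambda_2(\bar{L}) \|z_{\mathcal{C}^\perp}\|^2$. -/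
open Matrix BigOperators Kronecker

section helpers

variable {N M : ℕ}

lemma aux_symm_swap {n : Type*} [Fintype n] (A : Matrix n n ℝ) (hA : A.IsSymm)
    (x y : n → ℝ) : x ⬝ᵥ (A *ᵥ y) = y ⬝ᵥ (A *ᵥ x) := by
  rw [Matrix.dotProduct_mulVec, ← Matrix.mulVec_transpose, hA.eq, dotProduct_comm]

lemma aux_sum_col (hN : 0 < N) (z : Fin N × Fin M → ℝ) (m : Fin M) :
    ∑ n : Fin N, projCperp z (n, m) = 0 := by
  have hNne : (N : ℝ) ≠ 0 := Nat.cast_ne_zero.mpr hN.ne'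
  simp only [projCperp, Pi.sub_apply, projC, Finset.sum_sub_distrib, Finset.sum_const,
    Finset.card_univ, Fintype.card_fin, nsmul_eq_mul]
  field_simp
  ring

lemma aux_ortho (hN : 0 < N) (z : Fin N × Fin M → ℝ) :
    ∑ p : Fin N × Fin M, projC z p * projCperp z p = 0 := by
  rw [Fintype.sum_prod_type_right]
  refine Finset.sum_eq_zero fun m _ => ?_
  have : ∀ n : Fin N, projC z (n, m) = (∑ n : Fin N, z (n, m)) / N := fun n => rfl
  calc ∑ n : Fin N, projC z (n, m) * projCperp z (n, m)
      = ((∑ n : Fin N, z (n, m)) / N) * ∑ n : Fin N, projCperp z (n, m) := by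
        rw [Finset.mul_sum]; exact Finset.sum_congr rfl fun n _ => by rw [this n]
    _ = 0 := by rw [aux_sum_col hN z m, mul_zero]

lemma aux_norm_split (hN : 0 < N) (z : Fin N × Fin M → ℝ) :
    ∑ p, z p ^ 2 = (∑ p, projC z p ^ 2) + ∑ p, projCperp z p ^ 2 := by
  have hz : ∀ p, z p = projC z p + projCperp z p := fun p => by
    simp [projCperp]
  have := aux_ortho hN z
  calc ∑ p, z p ^ 2 = ∑ p, (projC z p ^ 2 + 2 * (projC z p * projCperp z p)
        + projCperp z p ^ 2) := by
        refine Finset.sum_congr rfl fun p _ => ?_; rw [hz p]; ring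
    _ = (∑ p, projC z p ^ 2) + 2 * (∑ p, projC z p * projCperp z p)
        + ∑ p, projCperp z p ^ 2 := by
        rw [Finset.sum_add_distrib, Finset.sum_add_distrib, Finset.mul_sum]
    _ = _ := by rw [this]; ring

lemma aux_kron_mulVec (L : Matrix (Fin N) (Fin N) ℝ) (v : Fin N × Fin M → ℝ)
    (p : Fin N × Fin M) :
    ((L ⊗ₖ (1 : Matrix (Fin M) (Fin M) ℝ)) *ᵥ v) p = ∑ n, L p.1 n * v (n, p.2) := by
  simp only [Matrix.mulVec, dotProduct, kroneckerMap_apply, Fintype.sum_prod_type,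
    Matrix.one_apply]
  simp [mul_ite, Finset.sum_ite_eq]

lemma aux_kron_quad (L : Matrix (Fin N) (Fin N) ℝ) (v : Fin N × Fin M → ℝ) :
    v ⬝ᵥ ((L ⊗ₖ (1 : Matrix (Fin M) (Fin M) ℝ)) *ᵥ v)
      = ∑ m : Fin M, (fun n => v (n, m)) ⬝ᵥ (L *ᵥ fun n => v (n, m)) := by
  rw [show ((L ⊗ₖ (1 : Matrix (Fin M) (Fin M) ℝ)) *ᵥ v)
      = fun p => ∑ n, L p.1 n * v (n, p.2) from funext (aux_kron_mulVec L v)]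
  simp only [dotProduct, Matrix.mulVec]
  rw [Fintype.sum_prod_type_right]

lemma aux_kron_projC (L : Matrix (Fin N) (Fin N) ℝ)
    (hones : L *ᵥ (fun _ => (1 : ℝ)) = 0) (z : Fin N × Fin M → ℝ) :
    (L ⊗ₖ (1 : Matrix (Fin M) (Fin M) ℝ)) *ᵥ projC z = 0 := by
  funext p
  have h1 : ∑ n, L p.1 n = 0 := by
    have := congrFun hones p.1
    simpa [Matrix.mulVec, dotProduct] using this
  rw [aux_kron_mulVec]
  have : ∀ n : Fin N, L p.1 n * projC z (n, p.2)
      = L p.1 n * ((∑ k : Fin N, z (k, p.2)) / N) := fun n => rfl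
  simp only [this, ← Finset.sum_mul, h1, zero_mul, Pi.zero_apply]

lemma aux_lambda2_le (L : Matrix (Fin N) (Fin N) ℝ) (hpsd : L.PosSemidef)
    (w : Fin N → ℝ) (hw : ∑ n, w n = 0) :
    lambda2 L * ∑ n, w n ^ 2 ≤ w ⬝ᵥ (L *ᵥ w) := by
  have hpsd' : ∀ x : Fin N → ℝ, 0 ≤ x ⬝ᵥ (L *ᵥ x) := fun x => by
    have := hpsd.dotProduct_mulVec_nonneg x
    simpa using this
  have hbdd : BddBelow {x : ℝ | ∃ z : Fin N → ℝ,
      (∑ i, z i ^ 2) = 1 ∧ (∑ i, z i) = 0 ∧ x = z ⬝ᵥ (L *ᵥ z)} := by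
    refine ⟨0, fun x hx => ?_⟩
    obtain ⟨u, _, _, rfl⟩ := hx
    exact hpsd' u
  rcases eq_or_lt_of_le (Finset.sum_nonneg fun n _ => sq_nonneg (w n)) with hs | hs
  · have hwz : ∀ n, w n = 0 := by
      intro n
      have := (Finset.sum_eq_zero_iff_of_nonneg (fun i _ => sq_nonneg (w i))).1 hs.symm n
        (Finset.mem_univ n)
      exact pow_eq_zero_iff (n := 2) (by norm_num) |>.1 this
    have hw0 : w = 0 := funext hwz
    rw [hw0]
    simp
  · set s : ℝ := ∑ n, w n ^ 2 with hsdef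
    have hsqrt : Real.sqrt s > 0 := Real.sqrt_pos.2 hs
    set u : Fin N → ℝ := fun n => w n / Real.sqrt s with hu
    have hu2 : ∑ n, u n ^ 2 = 1 := by
      simp only [hu, div_pow, ← Finset.sum_div, Real.sq_sqrt hs.le]
      field_simp
      exact hsdef.symm
    have hu0 : ∑ n, u n = 0 := by
      simp only [hu, ← Finset.sum_div, hw, zero_div]
    have hmem : u ⬝ᵥ (L *ᵥ u) ∈ {x : ℝ | ∃ z : Fin N → ℝ,
        (∑ i, z i ^ 2) = 1 ∧ (∑ i, z i) = 0 ∧ x = z ⬝ᵥ (L *ᵥ z)} :=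
      ⟨u, hu2, hu0, rfl⟩
    have hle : lambda2 L ≤ u ⬝ᵥ (L *ᵥ u) := csInf_le hbdd hmem
    have hquad : u ⬝ᵥ (L *ᵥ u) = (w ⬝ᵥ (L *ᵥ w)) / s := by
      have : u = (Real.sqrt s)⁻¹ • w := by
        funext n; simp [hu, div_eq_inv_mul]
      rw [this, Matrix.mulVec_smul, dotProduct_smul, smul_dotProduct]
      rw [smul_eq_mul, smul_eq_mul, ← mul_assoc, ← Real.sqrt_inv]
      rw [← Real.sqrt_mul_self (by positivity : (0:ℝ) ≤ s⁻¹)] at *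
      field_simp
      rw [Real.sq_sqrt (Real.sqrt_nonneg _), one_div, Real.sqrt_inv, Real.sqrt_sq hs.le]
      field_simp
    rw [hquad] at hle
    calc lambda2 L * s ≤ ((w ⬝ᵥ (L *ᵥ w)) / s) * s := by
          exact mul_le_mul_of_nonneg_right hle hs.le
      _ = w ⬝ᵥ (L *ᵥ w) := by field_simp

end helpers

theorem stmt_15 {N M : ℕ} (hN : 0 < N) (Lbar : Matrix (Fin N) (Fin N) ℝ)
    (hsymm : Lbar.IsSymm) (hpsd : Lbar.PosSemidef)
    (hones : Lbar *ᵥ (fun _ => (1 : ℝ)) = 0)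
    (hlam : 0 < lambda2 Lbar)
    (D Dtil : Matrix (Fin N × Fin M) (Fin N × Fin M) ℝ)
    (hDsymm : D.IsSymm) (hDtilsymm : Dtil.IsSymm)
    (hDC : ∀ z : Fin N × Fin M → ℝ, projC z ⬝ᵥ (D *ᵥ projC z) = ∑ p, projC z p ^ 2)
    (c1 : ℝ) (hc1 : 0 < c1)
    (hDperp : ∀ z : Fin N × Fin M → ℝ,
      -c1 * (∑ p, projCperp z p ^ 2) ≤ projCperp z ⬝ᵥ (D *ᵥ projCperp z))
    (hDcross : ∀ z : Fin N × Fin M → ℝ,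
      -c1 * Real.sqrt (∑ p, projC z p ^ 2) * Real.sqrt (∑ p, projCperp z p ^ 2)
        ≤ projC z ⬝ᵥ (D *ᵥ projCperp z))
    (ε : ℝ) (hε0 : 0 < ε) (hε1 : ε < 1)
    -- `‖Dtil - D‖ ≤ ε` in the spectral norm, stated via the (equivalent, for symmetric
    -- matrices) uniform quadratic-form bound
    (hclose : ∀ z : Fin N × Fin M → ℝ, |z ⬝ᵥ ((Dtil - D) *ᵥ z)| ≤ ε * ∑ p, z p ^ 2)
    (γ : ℝ) (hγ : 0 < γ)
    (hcond : c1 + ε + c1 ^ 2 / (1 - ε) ≤ γ / 2 * lambda2 Lbar) :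
    ∀ z : Fin N × Fin M → ℝ,
      γ / 2 * lambda2 Lbar * (∑ p, projCperp z p ^ 2) ≤
        z ⬝ᵥ ((γ • (Lbar ⊗ₖ (1 : Matrix (Fin M) (Fin M) ℝ)) + Dtil) *ᵥ z) := by
  intro z
  have h1ε : (0:ℝ) < 1 - ε := by linarith
  set zc := projC z with hzc
  set zp := projCperp z with hzp
  have hzsum : z = zc + zp := by funext p; simp [hzp, projCperp, hzc]
  set P : ℝ := ∑ p, zp p ^ 2 with hP
  set Q : ℝ := ∑ p, zc p ^ 2 with hQ
  have hPnn : 0 ≤ P := Finset.sum_nonneg fun p _ => sq_nonneg _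
  have hQnn : 0 ≤ Q := Finset.sum_nonneg fun p _ => sq_nonneg _
  set K := Lbar ⊗ₖ (1 : Matrix (Fin M) (Fin M) ℝ) with hK
  have hKsymm : K.IsSymm := by
    show Kᵀ = K
    rw [hK, ← Matrix.kroneckerMap_transpose, hsymm.eq, Matrix.transpose_one]
  have hKzc : K *ᵥ zc = 0 := aux_kron_projC Lbar hones z
  -- Laplacian part
  have hKz : lambda2 Lbar * P ≤ z ⬝ᵥ (K *ᵥ z) := by
    have h1 : z ⬝ᵥ (K *ᵥ z) = zp ⬝ᵥ (K *ᵥ zp) := by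
      rw [hzsum]
      simp only [Matrix.mulVec_add, dotProduct_add, add_dotProduct, hKzc,
        dotProduct_zero, zero_dotProduct, zero_add, add_zero]
      rw [aux_symm_swap K hKsymm zc zp, hKzc]
      simp
    have h2 : zp ⬝ᵥ (K *ᵥ zp)
        = ∑ m : Fin M, (fun n => zp (n, m)) ⬝ᵥ (Lbar *ᵥ fun n => zp (n, m)) :=
      aux_kron_quad Lbar zp
    have hPsum : P = ∑ m : Fin M, ∑ n : Fin N, zp (n, m) ^ 2 := by
      rw [hP, Fintype.sum_prod_type_right]
    rw [h1, h2, hPsum, Finset.mul_sum]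
    exact Finset.sum_le_sum fun m _ =>
      aux_lambda2_le Lbar hpsd _ (aux_sum_col hN z m)
  -- Dtil part
  have hDz : -(c1 + ε + c1 ^ 2 / (1 - ε)) * P ≤ z ⬝ᵥ (Dtil *ᵥ z) := by
    have hsplit : z ⬝ᵥ (Dtil *ᵥ z)
        = z ⬝ᵥ (D *ᵥ z) + z ⬝ᵥ ((Dtil - D) *ᵥ z) := by
      rw [Matrix.sub_mulVec, dotProduct_sub]; ring
    have hpert : -(ε * (Q + P)) ≤ z ⬝ᵥ ((Dtil - D) *ᵥ z) := by
      have := hclose z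
      have hnorm := aux_norm_split hN z
      rw [hnorm] at this
      have := neg_abs_le (z ⬝ᵥ ((Dtil - D) *ᵥ z))
      linarith [neg_abs_le (z ⬝ᵥ ((Dtil - D) *ᵥ z)), abs_le.1 (hclose z)]
    have hDexp : z ⬝ᵥ (D *ᵥ z)
        = zc ⬝ᵥ (D *ᵥ zc) + 2 * (zc ⬝ᵥ (D *ᵥ zp)) + zp ⬝ᵥ (D *ᵥ zp) := by
      rw [hzsum]
      simp only [Matrix.mulVec_add, dotProduct_add, add_dotProduct]
      rw [aux_symm_swap D hDsymm zp zc]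
      ring
    have hcc : zc ⬝ᵥ (D *ᵥ zc) = Q := hDC z
    have hpp : -c1 * P ≤ zp ⬝ᵥ (D *ᵥ zp) := hDperp z
    have hcp : -c1 * Real.sqrt Q * Real.sqrt P ≤ zc ⬝ᵥ (D *ᵥ zp) := hDcross z
    set a := Real.sqrt Q with ha
    set b := Real.sqrt P with hb
    have ha2 : a ^ 2 = Q := Real.sq_sqrt hQnn
    have hb2 : b ^ 2 = P := Real.sq_sqrt hPnn
    have hann : 0 ≤ a := Real.sqrt_nonneg _
    have hbnn : 0 ≤ b := Real.sqrt_nonneg _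
    have hcancel : c1 ^ 2 / (1 - ε) * (1 - ε) = c1 ^ 2 := by
      field_simp
    -- completed square
    have hsq : 0 ≤ (1 - ε) * Q - 2 * c1 * a * b + c1 ^ 2 / (1 - ε) * P := by
      nlinarith [sq_nonneg ((1 - ε) * a - c1 * b), mul_pos h1ε h1ε]
    rw [hsplit, hDexp, hcc]
    nlinarith
  -- combine
  have hexp : z ⬝ᵥ ((γ • K + Dtil) *ᵥ z)
      = γ * (z ⬝ᵥ (K *ᵥ z)) + z ⬝ᵥ (Dtil *ᵥ z) := by
    rw [Matrix.add_mulVec, dotProduct_add, Matrix.smul_mulVec,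
      dotProduct_smul, smul_eq_mul]
  rw [hexp]
  nlinarith [mul_le_mul_of_nonneg_left hKz hγ.le, mul_le_mul_of_nonneg_right hcond hPnn]
end
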